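/- Let m and n be positive integers and let ℓ be an integer with 0 ≤ ℓ ≤ 3. Then every ℓ-leaky fort of the Hopi rectangle graph HD(m,n) contains at least one vertex v with deg(v) = 2. -/

import Mathlib

/-- An `ℓ`-leaky fort: a nonempty set `S` such that at most `ℓ` vertices
outside of `S` have exactly one neighbor in `S`. -/
def IsLeakyFort {V : Type*} (G : SimpleGraph V) (ℓ : ℕ) (S : Set V) : Prop :=
  S.Nonempty ∧ {v | v ∉ S ∧ (G.neighborSet v ∩ S).ncard = 1}.ncard ≤ ℓ

/-- The vertex set of the Hopi rectangle graph of order `(m,n)`: the set of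
integer lattice points `(i,j)` with `m-1 ≤ i+j ≤ 2n+m-1` and `|i-j| ≤ m`
(realized as a `Finset` by filtering a sufficiently large box). -/
noncomputable def HDverts (m n : ℕ) : Finset (ℤ × ℤ) :=
  (Finset.Icc (-2 : ℤ) (2*n + 2*m) ×ˢ Finset.Icc (-2 : ℤ) (2*n + 2*m)).filter
    (fun p => (m : ℤ) - 1 ≤ p.1 + p.2 ∧ p.1 + p.2 ≤ 2*n + m - 1 ∧ |p.1 - p.2| ≤ m)

/-- The Hopi rectangle graph `HD(m,n)`: vertices are the points of `HDverts m n`,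
and `(i,j)` is adjacent to `(i',j')` iff `|i - i'| + |j - j'| = 1`. -/
def HD (m n : ℕ) : SimpleGraph {p : ℤ × ℤ // p ∈ HDverts m n} where
  Adj u v := |u.val.1 - v.val.1| + |u.val.2 - v.val.2| = 1
  symm := by
    constructor
    intro u v h
    rw [abs_sub_comm v.val.1 u.val.1, abs_sub_comm v.val.2 u.val.2]
    exact h
  loopless := by constructor; intro u h; simp at h

/-!
Every vertex of `HD(m,n)` has degree 2 or 4. If no vertex of `S` had degree 2, then all four
lattice steps from every vertex of `S` would stay in the graph. For each unit step `e`, a vertex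
of `S` maximising `⟪e, ·⟫` can then be pushed one step further in direction `e`, to a vertex
outside `S` whose only neighbour in `S` is that extreme vertex. These four leaks are distinct,
since the leak in direction `e` is the only one beyond `S` in that direction, so `ℓ ≥ 4`.
-/

namespace IntGrid

def unitSteps : Finset (ℤ × ℤ) := {(1, 0), (-1, 0), (0, 1), (0, -1)}

def dot (e p : ℤ × ℤ) : ℤ := e.1 * p.1 + e.2 * p.2

lemma dot_add (e p q : ℤ × ℤ) : dot e (p + q) = dot e p + dot e q := by
  simp only [dot, Prod.fst_add, Prod.snd_add]; ring

lemma dot_self {e : ℤ × ℤ} (he : e ∈ unitSteps) : dot e e = 1 := by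
  revert e; decide

lemma dot_nonpos_of_ne {e e' : ℤ × ℤ} (he : e ∈ unitSteps) (he' : e' ∈ unitSteps)
    (hne : e ≠ e') : dot e e' ≤ 0 := by
  revert hne; revert e'; revert e; decide

end IntGrid

open IntGrid

def SimpleGraph.leaks {V : Type*} (G : SimpleGraph V) (S : Set V) : Set V :=
  {v | v ∉ S ∧ (G.neighborSet v ∩ S).ncard = 1}

lemma mem_HDverts {m n : ℕ} {p : ℤ × ℤ} : p ∈ HDverts m n ↔
    (m : ℤ) - 1 ≤ p.1 + p.2 ∧ p.1 + p.2 ≤ 2 * n + m - 1 ∧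
      -(m : ℤ) ≤ p.1 - p.2 ∧ p.1 - p.2 ≤ m := by
  simp only [HDverts, Finset.mem_filter, Finset.mem_product, Finset.mem_Icc, abs_le]
  omega

namespace HD

variable {m n : ℕ}

lemma adj_iff {u v : {p : ℤ × ℤ // p ∈ HDverts m n}} :
    (HD m n).Adj u v ↔ v.val - u.val ∈ unitSteps := by
  change |u.val.1 - v.val.1| + |u.val.2 - v.val.2| = 1 ↔ _
  simp only [unitSteps, Finset.mem_insert, Finset.mem_singleton, Prod.ext_iff, Prod.fst_sub,
    Prod.snd_sub]
  rcases abs_cases (u.val.1 - v.val.1) with ⟨h1, _⟩ | ⟨h1, _⟩ <;>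
    rcases abs_cases (u.val.2 - v.val.2) with ⟨h2, _⟩ | ⟨h2, _⟩ <;> rw [h1, h2] <;> omega

lemma ncard_neighborSet (v : {p : ℤ × ℤ // p ∈ HDverts m n}) :
    ((HD m n).neighborSet v).ncard = (unitSteps.filter (v.val + · ∈ HDverts m n)).card := by
  have himage : Subtype.val '' (HD m n).neighborSet v =
      (v.val + ·) '' ↑(unitSteps.filter (v.val + · ∈ HDverts m n)) := by
    ext p
    simp only [Set.mem_image, SimpleGraph.mem_neighborSet, adj_iff, Finset.coe_filter,
      Set.mem_ofPred_eq]
    constructor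
    · rintro ⟨u, hu, rfl⟩
      exact ⟨u.val - v.val, ⟨hu, by simp [u.2]⟩, by abel⟩
    · rintro ⟨e, ⟨he, hmem⟩, rfl⟩
      exact ⟨⟨v.val + e, hmem⟩, by simpa using he, rfl⟩
  rw [← Set.ncard_image_of_injective _ Subtype.val_injective, himage,
    Set.ncard_image_of_injective _ (add_right_injective _), Set.ncard_coe_finset]

lemma ncard_neighborSet_eq_two_or_forall_add_mem (hm : 0 < m) (hn : 0 < n)
    (v : {p : ℤ × ℤ // p ∈ HDverts m n}) :
    ((HD m n).neighborSet v).ncard = 2 ∨ ∀ e ∈ unitSteps, v.val + e ∈ HDverts m n := by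
  obtain ⟨⟨a, b⟩, hv⟩ := v
  rw [mem_HDverts] at hv
  rw [ncard_neighborSet]
  simp only [unitSteps, Finset.filter_insert, Finset.filter_singleton, Finset.mem_insert,
    Finset.mem_singleton, forall_eq_or_imp, forall_eq, mem_HDverts, Prod.fst_add, Prod.snd_add]
  -- In the coordinates `i + j`, `i - j` the four steps are the diagonal moves `(±1, ±1)`, and
  -- by parity no vertex lies on two sides of the rectangle, so a vertex misses 0 or 2 steps.
  split_ifs <;> simp <;> omega

lemma add_mem_leaks_of_dot_max {S : Set {p : ℤ × ℤ // p ∈ HDverts m n}} {e : ℤ × ℤ}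
    (he : e ∈ unitSteps) {v w : {p : ℤ × ℤ // p ∈ HDverts m n}} (hv : v ∈ S)
    (hmax : ∀ u ∈ S, dot e u.val ≤ dot e v.val) (hw : w.val = v.val + e) :
    w ∈ (HD m n).leaks S := by
  have hdot_w : dot e w.val = dot e v.val + 1 := by rw [hw, dot_add, dot_self he]
  refine ⟨fun hwS => by linarith [hmax w hwS], ?_⟩
  suffices (HD m n).neighborSet w ∩ S = {v} by rw [this, Set.ncard_singleton]
  ext u
  simp only [Set.mem_inter_iff, SimpleGraph.mem_neighborSet, Set.mem_singleton_iff]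
  rw [SimpleGraph.adj_comm, adj_iff]
  constructor
  · rintro ⟨hstep, huS⟩
    have hstep_eq : w.val - u.val = e := by
      by_contra hne
      have hsplit : dot e w.val = dot e u.val + dot e (w.val - u.val) := by
        rw [← dot_add, add_sub_cancel]
      linarith [hmax u huS, dot_nonpos_of_ne he hstep (Ne.symm hne)]
    exact Subtype.ext <| by
      rw [← sub_sub_cancel w.val u.val, hstep_eq, hw, add_sub_cancel_right]
  · rintro rfl
    exact ⟨by rwa [hw, add_sub_cancel_left], hv⟩

lemma four_le_ncard_leaks {S : Set {p : ℤ × ℤ // p ∈ HDverts m n}} (hS : S.Nonempty)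
    (hsteps : ∀ v ∈ S, ∀ e ∈ unitSteps, v.val + e ∈ HDverts m n) :
    4 ≤ ((HD m n).leaks S).ncard := by
  choose far hfar_mem hfar_max using
    fun e : ℤ × ℤ => S.exists_max_image (dot e ·.val) S.toFinite hS
  have hinj : Set.InjOn (fun e => (far e).val + e) unitSteps := by
    intro e he e' he' heq
    by_contra hne
    have hdot := congrArg (dot e) heq
    simp only [dot_add, dot_self he] at hdot
    linarith [hfar_max e (far e') (hfar_mem e'), dot_nonpos_of_ne he he' hne]
  calc 4 = (unitSteps : Set (ℤ × ℤ)).ncard := by rw [Set.ncard_coe_finset]; rfl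
    _ ≤ (Subtype.val '' (HD m n).leaks S).ncard :=
      Set.ncard_le_ncard_of_injOn _ (fun e he => ⟨⟨_, hsteps _ (hfar_mem e) e he⟩,
        add_mem_leaks_of_dot_max he (hfar_mem e) (hfar_max e) rfl, rfl⟩) hinj
    _ = ((HD m n).leaks S).ncard := Set.ncard_image_of_injective _ Subtype.val_injective

end HD

/-- For `0 ≤ ℓ ≤ 3`, every `ℓ`-leaky fort of `HD(m,n)` contains a vertex of
degree `2`. -/
theorem HD_fort_contains_degree_two (m n : ℕ) (hm : 0 < m) (hn : 0 < n)
    (ℓ : ℕ) (hℓ : ℓ ≤ 3) (S : Set {p : ℤ × ℤ // p ∈ HDverts m n})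
    (hS : IsLeakyFort (HD m n) ℓ S) :
    ∃ v ∈ S, ((HD m n).neighborSet v).ncard = 2 := by
  obtain ⟨hne, hleaks⟩ := hS
  by_contra! hdeg
  have hsteps : ∀ v ∈ S, ∀ e ∈ unitSteps, v.val + e ∈ HDverts m n := fun v hv =>
    (HD.ncard_neighborSet_eq_two_or_forall_add_mem hm hn v).resolve_left (hdeg v hv)
  have : 4 ≤ ℓ := (HD.four_le_ncard_leaks hne hsteps).trans hleaks
  omega
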